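/- arXiv:2210.16297 — 2 statements merged into one kernel-verified Lean document; each statement's English description precedes it below -/
import Mathlib

section
/- Let Γ be a group acting by homeomorphisms on the real line ℝ, and let 𝒴 ⊆ 2^ℝ be a minimal closed Γ-invariant subset of the Chabauty space consisting of compact sets. Then the union of all members of 𝒴 is bounded (has compact closure). -/
open Set Filter Topology

/-- The space of closed subsets of `M`. -/
def Chabauty (M : Type*) [TopologicalSpace M] := {A : Set M // IsClosed A}

/-- The Chabauty (Fell) topology, generated by the sub-basic sets
`Hit U` for `U` open and `Miss K` for `K` compact. -/
instance Chabauty.instTopologicalSpace (M : Type*) [TopologicalSpace M] :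
    TopologicalSpace (Chabauty M) :=
  TopologicalSpace.generateFrom
    ({S | ∃ U : Set M, IsOpen U ∧ S = {A : Chabauty M | (A.1 ∩ U).Nonempty}} ∪
     {S | ∃ K : Set M, IsCompact K ∧ S = {A : Chabauty M | A.1 ∩ K = ∅}})

open Pointwise

attribute [instance 2000] Chabauty.instTopologicalSpace

def chabautySub (M : Type*) [TopologicalSpace M] : Set (Set (Chabauty M)) :=
  ({S | ∃ U : Set M, IsOpen U ∧ S = {A : Chabauty M | (A.1 ∩ U).Nonempty}} ∪
   {S | ∃ K : Set M, IsCompact K ∧ S = {A : Chabauty M | A.1 ∩ K = ∅}})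

lemma chabauty_eq_generateFrom (M : Type*) [TopologicalSpace M] :
    Chabauty.instTopologicalSpace M = TopologicalSpace.generateFrom (chabautySub M) := rfl

lemma chabauty_mem_of_forall_open {Y : Set (Chabauty ℝ)} (hclosed : IsClosed Y)
    (C : Chabauty ℝ) (hAll : ∀ O : Set (Chabauty ℝ), IsOpen O → C ∈ O → (O ∩ Y).Nonempty) :
    C ∈ Y := by
  rw [← hclosed.closure_eq]
  exact mem_closure_iff.mpr hAll

/-- The Kuratowski-type limit of a sequence of closed sets along an ultrafilter. -/
def limitSet (𝒰 : Ultrafilter ℕ) (A : ℕ → Chabauty ℝ) : Set ℝ :=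
  {x | ∀ V ∈ 𝓝 x, {n | ((A n).1 ∩ V).Nonempty} ∈ 𝒰}

lemma isClosed_limitSet (𝒰 : Ultrafilter ℕ) (A : ℕ → Chabauty ℝ) :
    IsClosed (limitSet 𝒰 A) := by
  rw [← isOpen_compl_iff, isOpen_iff_forall_mem_open]
  intro x hx
  simp only [mem_compl_iff, limitSet, mem_setOf_eq, not_forall] at hx
  obtain ⟨V, hV, hVnot⟩ := hx
  refine ⟨interior V, fun y hy hyC => hVnot ?_, isOpen_interior, mem_interior_iff_mem_nhds.2 hV⟩
  have h1 : {n | ((A n).1 ∩ interior V).Nonempty} ∈ 𝒰 :=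
    hyC (interior V) (isOpen_interior.mem_nhds hy)
  exact Filter.mem_of_superset h1 fun n hn => hn.mono (inter_subset_inter_right _ interior_subset)

lemma mem_limitSet_of_tendsto (𝒰 : Ultrafilter ℕ) (A : ℕ → Chabauty ℝ) {x : ℝ} {p : ℕ → ℝ}
    (hp : ∀ᶠ n in 𝒰, p n ∈ (A n).1) (ht : Tendsto p (𝒰 : Filter ℕ) (𝓝 x)) :
    x ∈ limitSet 𝒰 A := by
  intro V hV
  have h1 : {n | p n ∈ V} ∈ 𝒰 := ht hV
  filter_upwards [h1, hp] with n h1n h2n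
  exact ⟨p n, h2n, h1n⟩

lemma not_mem_limitSet (𝒰 : Ultrafilter ℕ) (A : ℕ → Chabauty ℝ) {x : ℝ} {V : Set ℝ}
    (hV : V ∈ 𝓝 x) (h : ∀ᶠ n in 𝒰, (A n).1 ∩ V = ∅) : x ∉ limitSet 𝒰 A := by
  intro hx
  obtain ⟨n, hn1, hn2⟩ := (𝒰.nonempty_of_mem (Filter.inter_mem (hx V hV) h))
  simp only [mem_setOf_eq] at hn1 hn2
  rw [hn2] at hn1
  exact hn1.ne_empty rfl

lemma limitSet_mem {Y : Set (Chabauty ℝ)} (hclosed : IsClosed Y)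
    (𝒰 : Ultrafilter ℕ) (A : ℕ → Chabauty ℝ) (hAY : ∀ n, A n ∈ Y) :
    (⟨limitSet 𝒰 A, isClosed_limitSet 𝒰 A⟩ : Chabauty ℝ) ∈ Y := by
  set C : Chabauty ℝ := ⟨limitSet 𝒰 A, isClosed_limitSet 𝒰 A⟩
  have hAll : ∀ O : Set (Chabauty ℝ), IsOpen O → C ∈ O → (O ∩ Y).Nonempty := by
    intro O hO hCO
    have hbasis := TopologicalSpace.isTopologicalBasis_of_subbasis (chabauty_eq_generateFrom ℝ)
    obtain ⟨v, hv, hCv, hvO⟩ := hbasis.exists_subset_of_mem_open hCO hO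
    obtain ⟨f, ⟨hffin, hfsub⟩, rfl⟩ := hv
    have hC' : ∀ T ∈ f, C ∈ T := fun T hT => hCv T hT
    -- for each S ∈ f, the set of n with A n ∈ S is in 𝒰
    have hkey : ∀ S ∈ f, {n | A n ∈ S} ∈ 𝒰 := by
      intro S hS
      rcases hfsub hS with ⟨U, hU, rfl⟩ | ⟨K, hK, rfl⟩
      · -- hit case
        obtain ⟨x, hxC, hxU⟩ := hC' _ hS
        exact Filter.mem_of_superset (hxC U (hU.mem_nhds hxU)) fun n hn => hn
      · -- miss case
        have hCK : C.1 ∩ K = ∅ := hC' _ hS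
        -- for each x in K, find an open nbhd W with miss-set in 𝒰
        have hWx : ∀ x : ℝ, x ∈ K → ∃ W : Set ℝ, IsOpen W ∧ x ∈ W ∧
            {n | (A n).1 ∩ W = ∅} ∈ 𝒰 := by
          intro x hxK
          have hxC : x ∉ C.1 := fun hx => by
            have : x ∈ C.1 ∩ K := ⟨hx, hxK⟩
            rw [hCK] at this; exact this
          replace hxC : ¬ ∀ V ∈ 𝓝 x, {n | ((A n).1 ∩ V).Nonempty} ∈ 𝒰 := hxC
          simp only [not_forall] at hxC
          obtain ⟨V, hV, hVnot⟩ := hxC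
          refine ⟨interior V, isOpen_interior, mem_interior_iff_mem_nhds.2 hV, ?_⟩
          rw [← Ultrafilter.compl_mem_iff_notMem] at hVnot
          refine Filter.mem_of_superset hVnot fun n hn => ?_
          simp only [mem_compl_iff, mem_setOf_eq, not_nonempty_iff_eq_empty] at hn ⊢
          exact Set.subset_empty_iff.1
            (le_trans (inter_subset_inter_right _ interior_subset) hn.subset)
        choose! W hWopen hWmem hWmiss using hWx
        obtain ⟨t, ht⟩ := hK.elim_finite_subcover (fun x : K => W x)
          (fun x => hWopen x x.2) (fun x hx => mem_iUnion.2 ⟨⟨x, hx⟩, hWmem x hx⟩)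
        have hbig : (⋂ x ∈ t, {n | (A n).1 ∩ W (x : ↑K) = ∅}) ∈ 𝒰 :=
          (Filter.biInter_finset_mem t).2 fun x _ => hWmiss (x : ↑K) x.2
        refine Filter.mem_of_superset hbig fun n hn => ?_
        simp only [mem_iInter, mem_setOf_eq] at hn ⊢
        rw [← Set.subset_empty_iff]
        rintro y ⟨hyA, hyK⟩
        obtain ⟨x, hxt, hyW⟩ : ∃ x ∈ t, y ∈ W (x : ↑K) := by
          have := ht hyK
          simpa using this
        have hy2 : y ∈ (A n).1 ∩ W (x : ↑K) := ⟨hyA, hyW⟩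
        rw [hn x hxt] at hy2
        exact hy2
    have : (⋂ S ∈ f, {n | A n ∈ S}) ∈ 𝒰 := (Filter.biInter_mem hffin).2 hkey
    obtain ⟨n, hn⟩ := 𝒰.nonempty_of_mem this
    simp only [mem_iInter, mem_setOf_eq] at hn
    exact ⟨A n, hvO (fun T hT => hn T hT), hAY n⟩
  exact chabauty_mem_of_forall_open hclosed C hAll

lemma isOpen_hit {M : Type*} [TopologicalSpace M] {U : Set M} (hU : IsOpen U) :
    IsOpen {A : Chabauty M | (A.1 ∩ U).Nonempty} :=
  TopologicalSpace.GenerateOpen.basic _ (Or.inl ⟨U, hU, rfl⟩)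

lemma isClosed_subsets_of_isClosed {M : Type*} [TopologicalSpace M] {F : Set M}
    (hF : IsClosed F) : IsClosed {A : Chabauty M | A.1 ⊆ F} := by
  have h : {A : Chabauty M | A.1 ⊆ F}ᶜ = {A : Chabauty M | (A.1 ∩ Fᶜ).Nonempty} := by
    ext A
    simp [Set.not_subset, Set.inter_compl_nonempty_iff]
  rw [← isOpen_compl_iff, h]
  exact isOpen_hit hF.isOpen_compl

lemma isClosed_eq_empty {M : Type*} [TopologicalSpace M] :
    IsClosed {A : Chabauty M | A.1 = ∅} := by
  have h : {A : Chabauty M | A.1 = ∅} = {A : Chabauty M | A.1 ⊆ (∅ : Set M)} := by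
    ext A
    simp [Set.subset_empty_iff]
  rw [h]
  exact isClosed_subsets_of_isClosed isClosed_empty

section MainAux

variable {Γ : Type*} [Group Γ] [MulAction Γ ℝ]

lemma smul_isGreatest {γ : Γ} {A : Set ℝ} {a : ℝ} (hm : Monotone (fun x : ℝ => γ • x))
    (h : IsGreatest A a) : IsGreatest (γ • A) (γ • a) := by
  constructor
  · exact Set.smul_mem_smul_set h.1
  · rintro x ⟨y, hy, rfl⟩
    exact hm (h.2 hy)

lemma smul_isLeast {γ : Γ} {A : Set ℝ} {a : ℝ} (hm : Monotone (fun x : ℝ => γ • x))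
    (h : IsLeast A a) : IsLeast (γ • A) (γ • a) := by
  constructor
  · exact Set.smul_mem_smul_set h.1
  · rintro x ⟨y, hy, rfl⟩
    exact hm (h.2 hy)

end MainAux

/-- For a group acting by homeomorphisms on the real line, the union of any
minimal closed invariant family of compact closed subsets of `ℝ` has compact
closure (is bounded). -/
theorem stmt_14 {Γ : Type*} [Group Γ] [MulAction Γ ℝ]
    (hact : ∀ γ : Γ, Continuous fun x : ℝ => γ • x)
    (Y : Set (Chabauty ℝ)) (hne : Y.Nonempty) (hclosed : IsClosed Y)
    (hcpt : ∀ A ∈ Y, IsCompact A.1)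
    (hinv : ∀ γ : Γ, ∀ A ∈ Y, ∀ h : IsClosed (γ • A.1), (⟨γ • A.1, h⟩ : Chabauty ℝ) ∈ Y)
    (hmin : ∀ A ∈ Y, Y ⊆ closure {B : Chabauty ℝ | ∃ γ : Γ, B.1 = γ • A.1}) :
    IsCompact (closure (⋃ A ∈ Y, A.1)) := by
  classical
  by_cases hE : ∃ A ∈ Y, A.1 = (∅ : Set ℝ)
  · -- if the empty set belongs to `Y`, minimality forces `Y = {∅}`.
    obtain ⟨A₀, hA₀, hA₀e⟩ := hE
    have hsub : {B : Chabauty ℝ | ∃ γ : Γ, B.1 = γ • A₀.1} ⊆ {B : Chabauty ℝ | B.1 = ∅} := by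
      rintro B ⟨γ, hB⟩
      rw [mem_setOf_eq, hB, hA₀e, Set.smul_set_empty]
    have hY0 : ∀ A ∈ Y, A.1 = ∅ := fun A hA =>
      (closure_minimal hsub isClosed_eq_empty) (hmin A₀ hA₀ hA)
    have hU : (⋃ A ∈ Y, A.1) ⊆ (∅ : Set ℝ) := iUnion₂_subset fun A hA => by
      rw [hY0 A hA]
    rw [Set.subset_empty_iff] at hU
    rw [hU, closure_empty]
    exact isCompact_empty
  push_neg at hE
  have hNE : ∀ A ∈ Y, A.1.Nonempty := fun A hA => hE A hA
  -- an ultrafilter extending the cofinite filter on ℕ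
  let 𝒰 : Ultrafilter ℕ := Ultrafilter.of atTop
  have h𝒰 : (𝒰 : Filter ℕ) ≤ atTop := Ultrafilter.of_le _
  -- each group element acts strictly monotonically or antitonically
  have hdich : ∀ γ : Γ, StrictMono (fun x : ℝ => γ • x) ∨ StrictAnti (fun x : ℝ => γ • x) :=
    fun γ => (hact γ).strictMono_of_inj (MulAction.injective γ)
  have hinvMono : ∀ γ : Γ, StrictMono (fun x : ℝ => γ • x) →
      StrictMono (fun x : ℝ => γ⁻¹ • x) := by
    intro γ hγ a b hab
    by_contra h
    push_neg at h
    have h2 : γ • (γ⁻¹ • b) ≤ γ • (γ⁻¹ • a) := hγ.monotone h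
    simp only [smul_inv_smul] at h2
    exact absurd h2 (not_le.2 hab)
  have hinvAnti : ∀ γ : Γ, StrictAnti (fun x : ℝ => γ • x) →
      StrictAnti (fun x : ℝ => γ⁻¹ • x) := by
    intro γ hγ a b hab
    by_contra h
    push_neg at h
    have h2 : γ • (γ⁻¹ • b) ≤ γ • (γ⁻¹ • a) := hγ.antitone h
    simp only [smul_inv_smul] at h2
    exact absurd h2 (not_le.2 hab)
  -- invariance, packaged
  have hclosed_smul : ∀ (γ : Γ) (A : Chabauty ℝ), A ∈ Y → IsClosed (γ • A.1) := by
    intro γ A hA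
    have himg : γ • A.1 = (fun x : ℝ => γ • x) '' A.1 := rfl
    rw [himg]
    exact ((hcpt A hA).image (hact γ)).isClosed
  -- the set of greatest points of members of Y
  set S : Set ℝ := {x | ∃ A ∈ Y, IsGreatest A.1 x} with hS_def
  have hSne : S.Nonempty := by
    obtain ⟨A, hA⟩ := hne
    obtain ⟨x, hx⟩ := (hcpt A hA).exists_isGreatest (hNE A hA)
    exact ⟨x, A, hA, hx⟩
  have hSbdd : BddBelow S := by
    by_contra hbd
    rw [not_bddBelow_iff] at hbd
    have hseq : ∀ n : ℕ, ∃ A ∈ Y, ∃ x, IsGreatest A.1 x ∧ x < -(n : ℝ) := by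
      intro n
      obtain ⟨x, hxS, hxlt⟩ := hbd (-(n : ℝ))
      obtain ⟨A, hA, hg⟩ := hxS
      exact ⟨A, hA, x, hg, hxlt⟩
    choose Aseq hAseqY xseq hxg hxlt using hseq
    have hCY := limitSet_mem hclosed 𝒰 Aseq hAseqY
    obtain ⟨y, hy⟩ := hNE _ hCY
    have hev : ∀ᶠ n in (𝒰 : Filter ℕ), (Aseq n).1 ∩ Ioi (y - 1) = ∅ := by
      refine Eventually.filter_mono h𝒰 ?_
      have h1 : ∀ᶠ n : ℕ in atTop, (1 - y) ≤ (n : ℝ) :=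
        tendsto_natCast_atTop_atTop.eventually_ge_atTop (1 - y)
      filter_upwards [h1] with n hn
      rw [Set.eq_empty_iff_forall_notMem]
      rintro z ⟨hz1, hz2⟩
      have hz3 : z ≤ xseq n := (hxg n).2 hz1
      have : xseq n < -(n : ℝ) := hxlt n
      rw [mem_Ioi] at hz2
      linarith
    exact not_mem_limitSet 𝒰 Aseq (Ioi_mem_nhds (by linarith)) hev hy
  set s : ℝ := sInf S with hs_def
  have hs_min : ∀ A ∈ Y, ∀ x : ℝ, IsGreatest A.1 x → s ≤ x := fun A hA x hx =>
    csInf_le hSbdd ⟨A, hA, hx⟩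
  -- an element of Y whose greatest point is exactly s
  have hAstar : ∃ Astar ∈ Y, IsGreatest Astar.1 s := by
    have hex : ∀ n : ℕ, ∃ A ∈ Y, ∃ x, IsGreatest A.1 x ∧ x < s + 1 / ((n : ℝ) + 1) := by
      intro n
      have hpos : (0 : ℝ) < 1 / ((n : ℝ) + 1) := by positivity
      obtain ⟨x, hxS, hlt⟩ := (csInf_lt_iff hSbdd hSne).1 (lt_add_of_pos_right s hpos)
      obtain ⟨A, hA, hg⟩ := hxS
      exact ⟨A, hA, x, hg, hlt⟩
    choose Aseq hAY xseq hg hlt using hex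
    have hxge : ∀ n, s ≤ xseq n := fun n => hs_min _ (hAY n) _ (hg n)
    refine ⟨⟨limitSet 𝒰 Aseq, isClosed_limitSet _ _⟩, limitSet_mem hclosed 𝒰 Aseq hAY, ?_, ?_⟩
    · -- s belongs to the limit set
      apply mem_limitSet_of_tendsto 𝒰 Aseq (p := xseq)
        (Eventually.of_forall fun n => (hg n).1)
      refine Tendsto.mono_left ?_ h𝒰
      have h1 : Tendsto (fun n : ℕ => s + 1 / ((n : ℝ) + 1)) atTop (𝓝 s) := by
        have h0 := tendsto_one_div_add_atTop_nhds_zero_nat (𝕜 := ℝ)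
        simpa using tendsto_const_nhds.add h0
      exact tendsto_of_tendsto_of_tendsto_of_le_of_le tendsto_const_nhds h1 hxge
        fun n => (hlt n).le
    · -- s is an upper bound of the limit set
      intro x hx
      by_contra hgt
      push_neg at hgt
      have hw : s < (s + x) / 2 ∧ (s + x) / 2 < x := by constructor <;> linarith
      have hV : Ioi ((s + x) / 2) ∈ 𝓝 x := Ioi_mem_nhds hw.2
      have hev : ∀ᶠ n in (𝒰 : Filter ℕ), (Aseq n).1 ∩ Ioi ((s + x) / 2) = ∅ := by
        refine Eventually.filter_mono h𝒰 ?_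
        have h0 := tendsto_one_div_add_atTop_nhds_zero_nat (𝕜 := ℝ)
        have h1 : ∀ᶠ n : ℕ in atTop, 1 / ((n : ℝ) + 1) < (x - s) / 2 :=
          h0.eventually_lt_const (by linarith)
        filter_upwards [h1] with n hn
        rw [Set.eq_empty_iff_forall_notMem]
        rintro z ⟨hz1, hz2⟩
        have hz3 : z ≤ xseq n := (hg n).2 hz1
        have hz4 : xseq n < s + 1 / ((n : ℝ) + 1) := hlt n
        rw [mem_Ioi] at hz2
        linarith
      exact not_mem_limitSet 𝒰 Aseq hV hev hx
  obtain ⟨Astar, hAstarY, hgstar⟩ := hAstar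
  -- the set of least points of members of Y contained in Iic s
  set S' : Set ℝ := {x | ∃ A ∈ Y, A.1 ⊆ Iic s ∧ IsLeast A.1 x} with hS'_def
  have hAstar_sub : Astar.1 ⊆ Iic s := fun x hx => hgstar.2 hx
  have hS'ne : S'.Nonempty := by
    obtain ⟨x, hx⟩ := (hcpt Astar hAstarY).exists_isLeast (hNE Astar hAstarY)
    exact ⟨x, Astar, hAstarY, hAstar_sub, hx⟩
  have hS'bdd : BddAbove S' := by
    refine ⟨s, ?_⟩
    rintro x ⟨A, hA, hsub, hleast⟩
    exact hsub hleast.1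
  set σ : ℝ := sSup S' with hσ_def
  have hσ_max : ∀ A ∈ Y, A.1 ⊆ Iic s → ∀ x : ℝ, IsLeast A.1 x → x ≤ σ := fun A hA hsub x hx =>
    le_csSup hS'bdd ⟨A, hA, hsub, hx⟩
  -- an element A₂ of Y with A₂ ⊆ [σ, s] and least point σ
  have hA₂ex : ∃ A₂ ∈ Y, A₂.1 ⊆ Icc σ s ∧ IsLeast A₂.1 σ := by
    have hex : ∀ n : ℕ, ∃ A ∈ Y, A.1 ⊆ Iic s ∧ ∃ x, IsLeast A.1 x ∧
        σ - 1 / ((n : ℝ) + 1) < x := by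
      intro n
      have hpos : (0 : ℝ) < 1 / ((n : ℝ) + 1) := by positivity
      obtain ⟨x, hxS, hlt⟩ := (lt_csSup_iff hS'bdd hS'ne).1 (by linarith : σ - 1 / ((n : ℝ) + 1) < σ)
      obtain ⟨A, hA, hsub, hg⟩ := hxS
      exact ⟨A, hA, hsub, x, hg, hlt⟩
    choose Bseq hBY hBsub xseq hg hlt using hex
    have hxle : ∀ n, xseq n ≤ σ := fun n => hσ_max _ (hBY n) (hBsub n) _ (hg n)
    refine ⟨⟨limitSet 𝒰 Bseq, isClosed_limitSet _ _⟩, limitSet_mem hclosed 𝒰 Bseq hBY, ?_, ?_, ?_⟩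
    · -- contained in Icc σ s
      intro x hx
      constructor
      · -- σ ≤ x
        by_contra hgt
        push_neg at hgt
        have hw : x < (x + σ) / 2 ∧ (x + σ) / 2 < σ := by constructor <;> linarith
        have hV : Iio ((x + σ) / 2) ∈ 𝓝 x := Iio_mem_nhds hw.1
        have hev : ∀ᶠ n in (𝒰 : Filter ℕ), (Bseq n).1 ∩ Iio ((x + σ) / 2) = ∅ := by
          refine Eventually.filter_mono h𝒰 ?_
          have h0 := tendsto_one_div_add_atTop_nhds_zero_nat (𝕜 := ℝ)
          have h1 : ∀ᶠ n : ℕ in atTop, 1 / ((n : ℝ) + 1) < (σ - x) / 2 :=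
            h0.eventually_lt_const (by linarith)
          filter_upwards [h1] with n hn
          rw [Set.eq_empty_iff_forall_notMem]
          rintro z ⟨hz1, hz2⟩
          have hz3 : xseq n ≤ z := (hg n).2 hz1
          have hz4 : σ - 1 / ((n : ℝ) + 1) < xseq n := hlt n
          rw [mem_Iio] at hz2
          linarith
        exact absurd hx (not_mem_limitSet 𝒰 Bseq hV hev)
      · -- x ≤ s
        by_contra hgt
        push_neg at hgt
        have hV : Ioi s ∈ 𝓝 x := Ioi_mem_nhds hgt
        have hev : ∀ᶠ n in (𝒰 : Filter ℕ), (Bseq n).1 ∩ Ioi s = ∅ := by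
          refine Eventually.of_forall fun n => ?_
          rw [Set.eq_empty_iff_forall_notMem]
          rintro z ⟨hz1, hz2⟩
          rw [mem_Ioi] at hz2
          exact absurd (hBsub n hz1) (not_le.2 hz2)
        exact absurd hx (not_mem_limitSet 𝒰 Bseq hV hev)
    · -- σ belongs to the limit set
      apply mem_limitSet_of_tendsto 𝒰 Bseq (p := xseq)
        (Eventually.of_forall fun n => (hg n).1)
      refine Tendsto.mono_left ?_ h𝒰
      have h1 : Tendsto (fun n : ℕ => σ - 1 / ((n : ℝ) + 1)) atTop (𝓝 σ) := by
        have h0 := tendsto_one_div_add_atTop_nhds_zero_nat (𝕜 := ℝ)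
        simpa using tendsto_const_nhds.sub h0
      exact tendsto_of_tendsto_of_tendsto_of_le_of_le h1 tendsto_const_nhds
        (fun n => (hlt n).le) hxle
    · -- σ is a lower bound
      intro x hx
      by_contra hgt
      push_neg at hgt
      have hw : x < (x + σ) / 2 ∧ (x + σ) / 2 < σ := by constructor <;> linarith
      have hV : Iio ((x + σ) / 2) ∈ 𝓝 x := Iio_mem_nhds hw.1
      have hev : ∀ᶠ n in (𝒰 : Filter ℕ), (Bseq n).1 ∩ Iio ((x + σ) / 2) = ∅ := by
        refine Eventually.filter_mono h𝒰 ?_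
        have h0 := tendsto_one_div_add_atTop_nhds_zero_nat (𝕜 := ℝ)
        have h1 : ∀ᶠ n : ℕ in atTop, 1 / ((n : ℝ) + 1) < (σ - x) / 2 :=
          h0.eventually_lt_const (by linarith)
        filter_upwards [h1] with n hn
        rw [Set.eq_empty_iff_forall_notMem]
        rintro z ⟨hz1, hz2⟩
        have hz3 : xseq n ≤ z := (hg n).2 hz1
        have hz4 : σ - 1 / ((n : ℝ) + 1) < xseq n := hlt n
        rw [mem_Iio] at hz2
        linarith
      exact absurd hx (not_mem_limitSet 𝒰 Bseq hV hev)
  obtain ⟨A₂, hA₂Y, hA₂sub, hA₂least⟩ := hA₂ex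
  -- increasing elements fix s
  have hkey_s : ∀ γ : Γ, StrictMono (fun x : ℝ => γ • x) → s ≤ γ • s := by
    intro γ hγ
    have hcl := hclosed_smul γ Astar hAstarY
    have hmem := hinv γ Astar hAstarY hcl
    have hg2 : IsGreatest (γ • Astar.1) (γ • s) := smul_isGreatest hγ.monotone hgstar
    exact hs_min _ hmem _ hg2
  have hfix_s : ∀ γ : Γ, StrictMono (fun x : ℝ => γ • x) → γ • s = s := by
    intro γ hγ
    refine le_antisymm ?_ (hkey_s γ hγ)
    have h2 := hkey_s γ⁻¹ (hinvMono γ hγ)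
    calc γ • s ≤ γ • (γ⁻¹ • s) := hγ.monotone h2
      _ = s := smul_inv_smul γ s
  -- increasing elements fix σ
  have hkey_σ : ∀ γ : Γ, StrictMono (fun x : ℝ => γ • x) → γ • σ ≤ σ := by
    intro γ hγ
    have hcl := hclosed_smul γ A₂ hA₂Y
    have hmem := hinv γ A₂ hA₂Y hcl
    have hsub2 : γ • A₂.1 ⊆ Iic s := by
      rintro _ ⟨y, hy, rfl⟩
      have hy2 : y ≤ s := (hA₂sub hy).2
      calc γ • y ≤ γ • s := hγ.monotone hy2
        _ = s := hfix_s γ hγ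
    have hl2 : IsLeast (γ • A₂.1) (γ • σ) := smul_isLeast hγ.monotone hA₂least
    exact hσ_max _ hmem hsub2 _ hl2
  have hfix_σ : ∀ γ : Γ, StrictMono (fun x : ℝ => γ • x) → γ • σ = σ := by
    intro γ hγ
    refine le_antisymm (hkey_σ γ hγ) ?_
    have h2 := hkey_σ γ⁻¹ (hinvMono γ hγ)
    calc σ = γ • (γ⁻¹ • σ) := (smul_inv_smul γ σ).symm
      _ ≤ γ • σ := hγ.monotone h2
  -- all decreasing elements agree on s and on σ
  have hdecEq : ∀ δ₁ δ₂ : Γ, StrictAnti (fun x : ℝ => δ₁ • x) →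
      StrictAnti (fun x : ℝ => δ₂ • x) → δ₁ • s = δ₂ • s ∧ δ₁ • σ = δ₂ • σ := by
    intro δ₁ δ₂ h1 h2
    have hcomp : StrictMono (fun x : ℝ => (δ₂⁻¹ * δ₁) • x) := by
      have heq : (fun x : ℝ => (δ₂⁻¹ * δ₁) • x) =
          (fun x : ℝ => δ₂⁻¹ • x) ∘ (fun x : ℝ => δ₁ • x) := by
        funext x
        simp [mul_smul]
      rw [heq]
      exact (hinvAnti δ₂ h2).comp h1
    constructor
    · calc δ₁ • s = δ₂ • ((δ₂⁻¹ * δ₁) • s) := by rw [mul_smul, smul_inv_smul]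
        _ = δ₂ • s := by rw [hfix_s _ hcomp]
    · calc δ₁ • σ = δ₂ • ((δ₂⁻¹ * δ₁) • σ) := by rw [mul_smul, smul_inv_smul]
        _ = δ₂ • σ := by rw [hfix_σ _ hcomp]
  -- the whole orbit of A₂ lies in a fixed compact interval
  have hbound : ∃ L₁ L₂ : ℝ, ∀ γ : Γ, γ • A₂.1 ⊆ Icc L₁ L₂ := by
    by_cases hdec : ∃ δ : Γ, StrictAnti (fun x : ℝ => δ • x)
    · obtain ⟨δ₀, hδ₀⟩ := hdec
      refine ⟨min σ (δ₀ • s), max s (δ₀ • σ), fun γ => ?_⟩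
      rcases hdich γ with hγ | hγ
      · rintro _ ⟨y, hy, rfl⟩
        obtain ⟨hy1, hy2⟩ := hA₂sub hy
        constructor
        · calc min σ (δ₀ • s) ≤ σ := min_le_left _ _
            _ = γ • σ := (hfix_σ γ hγ).symm
            _ ≤ γ • y := hγ.monotone hy1
        · calc γ • y ≤ γ • s := hγ.monotone hy2
            _ = s := hfix_s γ hγ
            _ ≤ max s (δ₀ • σ) := le_max_left _ _
      · rintro _ ⟨y, hy, rfl⟩
        obtain ⟨hy1, hy2⟩ := hA₂sub hy
        obtain ⟨hs_eq, hσ_eq⟩ := hdecEq γ δ₀ hγ hδ₀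
        constructor
        · calc min σ (δ₀ • s) ≤ δ₀ • s := min_le_right _ _
            _ = γ • s := hs_eq.symm
            _ ≤ γ • y := hγ.antitone hy2
        · calc γ • y ≤ γ • σ := hγ.antitone hy1
            _ = δ₀ • σ := hσ_eq
            _ ≤ max s (δ₀ • σ) := le_max_right _ _
    · push_neg at hdec
      refine ⟨σ, s, fun γ => ?_⟩
      have hγ := (hdich γ).resolve_right (hdec γ)
      rintro _ ⟨y, hy, rfl⟩
      obtain ⟨hy1, hy2⟩ := hA₂sub hy
      constructor
      · calc σ = γ • σ := (hfix_σ γ hγ).symm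
          _ ≤ γ • y := hγ.monotone hy1
      · calc γ • y ≤ γ • s := hγ.monotone hy2
          _ = s := hfix_s γ hγ
  obtain ⟨L₁, L₂, hL⟩ := hbound
  -- by minimality, every member of Y lies in [L₁, L₂]
  have hYsub : ∀ B ∈ Y, B.1 ⊆ Icc L₁ L₂ := by
    intro B hB
    have hBcl := hmin A₂ hA₂Y hB
    have hsub : {C : Chabauty ℝ | ∃ γ : Γ, C.1 = γ • A₂.1} ⊆
        {C : Chabauty ℝ | C.1 ⊆ Icc L₁ L₂} := by
      rintro C ⟨γ, hC⟩
      rw [mem_setOf_eq, hC]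
      exact hL γ
    exact closure_minimal hsub (isClosed_subsets_of_isClosed isClosed_Icc) hBcl
  have hUsub : (⋃ A ∈ Y, A.1) ⊆ Icc L₁ L₂ := iUnion₂_subset hYsub
  exact isCompact_Icc.of_isClosed_subset isClosed_closure (closure_minimal hUsub isClosed_Icc)
end

section
/- Let M be a locally compact Hausdorff space admitting a partition 𝒫 into compact open sets, and let 𝒴 be a non-empty closed subset of 2^M all of whose elements are compact. Then there exist a compact open subset U ⊆ M and Y ∈ 𝒴 such that {Z ∈ 𝒴 : Z ⊆ U} is a neighbourhood of Y in 𝒴. -/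
open Set Filter Topology

namespace ChabautyAux

variable {M : Type*} [TopologicalSpace M]

lemma isOpen_hit {U : Set M} (hU : IsOpen U) :
    IsOpen {A : Chabauty M | (A.1 ∩ U).Nonempty} :=
  TopologicalSpace.isOpen_generateFrom_of_mem (Or.inl ⟨U, hU, rfl⟩)

lemma isOpen_miss {K : Set M} (hK : IsCompact K) :
    IsOpen {A : Chabauty M | A.1 ∩ K = ∅} :=
  TopologicalSpace.isOpen_generateFrom_of_mem (Or.inr ⟨K, hK, rfl⟩)

lemma isClosed_hit {K : Set M} (hK : IsCompact K) :
    IsClosed {A : Chabauty M | (A.1 ∩ K).Nonempty} := by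
  rw [← isOpen_compl_iff]
  have h : {A : Chabauty M | (A.1 ∩ K).Nonempty}ᶜ = {A : Chabauty M | A.1 ∩ K = ∅} := by
    ext A; simp [Set.not_nonempty_iff_eq_empty]
  rw [h]
  exact isOpen_miss hK

instance : CompactSpace (Chabauty M) := by
  constructor
  rw [isCompact_iff_ultrafilter_le_nhds]
  intro f _
  set A : Set M := {x | ∀ U : Set M, IsOpen U → x ∈ U →
      {Z : Chabauty M | (Z.1 ∩ U).Nonempty} ∈ f} with hA
  have hAc : IsClosed A := by
    rw [← isOpen_compl_iff, isOpen_iff_forall_mem_open]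
    intro x hx
    simp only [hA, mem_compl_iff, mem_setOf_eq, not_forall] at hx
    obtain ⟨U, hUo, hxU, hUf⟩ := hx
    refine ⟨U, fun y hy => ?_, hUo, hxU⟩
    simp only [hA, mem_compl_iff, mem_setOf_eq, not_forall]
    exact ⟨U, hUo, hy, hUf⟩
  refine ⟨⟨A, hAc⟩, mem_univ _, ?_⟩
  refine (le_nhds_iff (X := Chabauty M) (x := ⟨A, hAc⟩)).mpr ?_
  intro s hAs hs
  have hs' : TopologicalSpace.GenerateOpen
      ({S | ∃ U : Set M, IsOpen U ∧ S = {A : Chabauty M | (A.1 ∩ U).Nonempty}} ∪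
       {S | ∃ K : Set M, IsCompact K ∧ S = {A : Chabauty M | A.1 ∩ K = ∅}}) s := hs
  clear hs
  induction hs' with
  | basic u hu =>
    rcases hu with ⟨U, hUo, rfl⟩ | ⟨K, hK, rfl⟩
    · obtain ⟨x, hxA, hxU⟩ := hAs
      exact hxA U hUo hxU
    · have hxK : ∀ x ∈ K, ∃ U : Set M, IsOpen U ∧ x ∈ U ∧
          {Z : Chabauty M | Z.1 ∩ U = ∅} ∈ f := by
        intro x hxK
        have hx : x ∉ A := fun hx => by
          have : x ∈ A ∩ K := ⟨hx, hxK⟩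
          rw [show A ∩ K = (∅ : Set M) from hAs] at this
          exact this
        simp only [hA, mem_setOf_eq, not_forall] at hx
        obtain ⟨U, hUo, hxU, hUf⟩ := hx
        refine ⟨U, hUo, hxU, ?_⟩
        have := (Ultrafilter.compl_mem_iff_notMem (f := f)).mpr hUf
        have he : {Z : Chabauty M | (Z.1 ∩ U).Nonempty}ᶜ
            = {Z : Chabauty M | Z.1 ∩ U = ∅} := by
          ext Z; simp [Set.not_nonempty_iff_eq_empty]
        rwa [he] at this
      choose! V hVo hxV hVf using hxK
      obtain ⟨t, ht⟩ := hK.elim_finite_subcover (fun x : K => V x)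
        (fun x => hVo x x.2)
        (fun x hx => mem_iUnion.mpr ⟨⟨x, hx⟩, hxV x hx⟩)
      have hmem : ⋂ x ∈ t, {Z : Chabauty M | Z.1 ∩ V x = ∅} ∈ f :=
        (biInter_mem t.finite_toSet).mpr fun x _ => hVf x x.2
      refine mem_of_superset hmem ?_
      intro Z hZ
      simp only [mem_iInter, mem_setOf_eq] at hZ
      show Z.1 ∩ K = ∅
      rw [Set.eq_empty_iff_forall_notMem]
      rintro y ⟨hyZ, hyK⟩
      obtain ⟨x, hxt, hyV⟩ : ∃ x ∈ t, y ∈ V x := by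
        have := ht hyK
        simpa using this
      have : y ∈ Z.1 ∩ V x := ⟨hyZ, hyV⟩
      rw [hZ x hxt] at this
      exact this
  | univ => exact univ_mem
  | inter u v _ _ ihu ihv => exact inter_mem (ihu hAs.1) (ihv hAs.2)
  | sUnion S _ ih =>
    obtain ⟨u, huS, hau⟩ := hAs
    exact mem_of_superset (ih u huS hau) (subset_sUnion_of_mem huS)

end ChabautyAux

/-- If `M` admits a partition into compact open sets and `Y` is a non-empty
closed family of compact closed subsets, then there are a compact open
`U ⊆ M` and `Y₀ ∈ Y` such that `{Z ∈ Y | Z ⊆ U}` is a neighbourhood of `Y₀`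
in `Y`. -/
theorem stmt_15 {M : Type*} [TopologicalSpace M] [LocallyCompactSpace M] [T2Space M]
    (Pa : Set (Set M)) (hPcpt : ∀ P ∈ Pa, IsCompact P) (hPopen : ∀ P ∈ Pa, IsOpen P)
    (hPdisj : Pa.PairwiseDisjoint id) (hPcover : ⋃₀ Pa = Set.univ)
    (Y : Set (Chabauty M)) (hne : Y.Nonempty) (hclosed : IsClosed Y)
    (hcpt : ∀ A ∈ Y, IsCompact A.1) :
    ∃ U : Set M, IsCompact U ∧ IsOpen U ∧
      ∃ Y₀ ∈ Y, {Z | Z ∈ Y ∧ Z.1 ⊆ U} ∈ nhdsWithin Y₀ Y := by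
  classical
  by_contra hcon
  push_neg at hcon
  -- Key step: any finite hit-configuration can be strictly enlarged.
  have step : ∀ s : Finset (Set M), ↑s ⊆ Pa →
      (∃ Z : Chabauty M, Z ∈ Y ∧ ∀ P ∈ s, (Z.1 ∩ P).Nonempty) →
      ∃ Q ∈ Pa, Q ∉ s ∧
        ∃ Z : Chabauty M, Z ∈ Y ∧ ∀ P ∈ insert Q s, (Z.1 ∩ P).Nonempty := by
    rintro s hsPa ⟨Z, hZY, hZs⟩
    set U : Set M := ⋃₀ ↑s with hU
    have hUc : IsCompact U := s.finite_toSet.isCompact_sUnion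
      (fun P hP => hPcpt P (hsPa hP))
    have hUo : IsOpen U := isOpen_sUnion fun P hP => hPopen P (hsPa hP)
    have hnot := hcon U hUc hUo Z hZY
    have hnall : ¬ ∀ Z' ∈ (⋂ P ∈ s, {A : Chabauty M | (A.1 ∩ P).Nonempty}) ∩ Y,
        Z'.1 ⊆ U := by
      intro hall
      apply hnot
      rw [mem_nhdsWithin]
      refine ⟨⋂ P ∈ s, {A : Chabauty M | (A.1 ∩ P).Nonempty},
        isOpen_biInter_finset (fun P hP => ChabautyAux.isOpen_hit (hPopen P (hsPa hP))),
        by simpa using hZs, ?_⟩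
      exact fun Z' hZ' => ⟨hZ'.2, hall Z' hZ'⟩
    push_neg at hnall
    obtain ⟨Z', hZ'mem, hZ'U⟩ := hnall
    obtain ⟨x, hxZ, hxU⟩ := Set.not_subset.mp hZ'U
    obtain ⟨Q, hQPa, hxQ⟩ : ∃ Q ∈ Pa, x ∈ Q := by
      have hx : x ∈ ⋃₀ Pa := hPcover ▸ mem_univ x
      exact hx
    have hQs : Q ∉ s := fun h => hxU ⟨Q, h, hxQ⟩
    refine ⟨Q, hQPa, hQs, Z', hZ'mem.2, ?_⟩
    intro P hP
    rcases Finset.mem_insert.mp hP with rfl | hP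
    · exact ⟨x, hxZ, hxQ⟩
    · have := hZ'mem.1
      simp only [mem_iInter, mem_setOf_eq] at this
      exact this P hP
  -- Build a strictly increasing sequence of configurations.
  let T := {s : Finset (Set M) // ↑s ⊆ Pa ∧
      ∃ Z : Chabauty M, Z ∈ Y ∧ ∀ P ∈ s, (Z.1 ∩ P).Nonempty}
  have hnext : ∀ t : T, ∃ t' : T, t.1 ⊆ t'.1 ∧ t.1.card < t'.1.card := by
    rintro ⟨s, hsPa, hs⟩
    obtain ⟨Q, hQPa, hQs, hex⟩ := step s hsPa hs
    refine ⟨⟨insert Q s, ?_, hex⟩, Finset.subset_insert _ _, ?_⟩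
    · intro P hP
      rcases Finset.mem_coe.mp hP with hP
      rcases Finset.mem_insert.mp hP with rfl | hP
      exacts [hQPa, hsPa hP]
    · simp only []
      rw [Finset.card_insert_of_notMem hQs]
      omega
  choose nxt hsub hcard using hnext
  obtain ⟨Z₀, hZ₀⟩ := hne
  let t0 : T := ⟨∅, by simp, Z₀, hZ₀, by simp⟩
  let seq : ℕ → T := fun n => nxt^[n] t0
  have hseq_succ : ∀ n, seq (n + 1) = nxt (seq n) := by
    intro n
    simp only [seq, Function.iterate_succ_apply']
  have hmono : ∀ n, (seq n).1 ⊆ (seq (n + 1)).1 := by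
    intro n; rw [hseq_succ]; exact hsub _
  have hcard' : ∀ n, n ≤ (seq n).1.card := by
    intro n
    induction n with
    | zero => omega
    | succ k ih =>
      have := hcard (seq k)
      rw [← hseq_succ] at this
      omega
  -- The decreasing sequence of nonempty closed sets.
  set V : ℕ → Set (Chabauty M) := fun n =>
    Y ∩ ⋂ P ∈ (seq n).1, {A : Chabauty M | (A.1 ∩ P).Nonempty} with hV
  have hVcl : ∀ n, IsClosed (V n) := by
    intro n
    refine hclosed.inter (isClosed_biInter fun P hP => ?_)
    exact ChabautyAux.isClosed_hit (hPcpt P ((seq n).2.1 hP))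
  have hVne : ∀ n, (V n).Nonempty := by
    intro n
    obtain ⟨Z, hZY, hZ⟩ := (seq n).2.2
    exact ⟨Z, hZY, by simpa using hZ⟩
  have hVdec : ∀ n, V (n + 1) ⊆ V n := by
    intro n Z hZ
    refine ⟨hZ.1, ?_⟩
    simp only [mem_iInter, mem_setOf_eq]
    intro P hP
    have hZ2 := hZ.2
    simp only [mem_iInter, mem_setOf_eq] at hZ2
    exact hZ2 P (hmono n hP)
  have hVint : (⋂ n, V n).Nonempty :=
    IsCompact.nonempty_iInter_of_sequence_nonempty_isCompact_isClosed V hVdec hVne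
      ((hVcl 0).isCompact) hVcl
  obtain ⟨Zs, hZs⟩ := hVint
  simp only [mem_iInter] at hZs
  have hZsY : Zs ∈ Y := (hZs 0).1
  -- Zs is compact, so it meets only finitely many pieces.
  obtain ⟨t, ht⟩ := (hcpt Zs hZsY).elim_finite_subcover (fun P : Pa => (P : Set M))
    (fun P => hPopen P P.2)
    (by
      intro x _
      have hx : x ∈ ⋃₀ Pa := hPcover ▸ mem_univ x
      obtain ⟨P, hPPa, hxP⟩ := hx
      exact mem_iUnion.mpr ⟨⟨P, hPPa⟩, hxP⟩)
  -- every seq n is contained in the image of t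
  have hbound : ∀ n, (seq n).1 ⊆ t.image (fun P : Pa => (P : Set M)) := by
    intro n P hP
    have hPPa : P ∈ Pa := (seq n).2.1 hP
    have hhit : (Zs.1 ∩ P).Nonempty := by
      have := (hZs n).2
      simp only [mem_iInter, mem_setOf_eq] at this
      exact this P hP
    obtain ⟨x, hxZ, hxP⟩ := hhit
    have hxcov := ht hxZ
    simp only [mem_iUnion] at hxcov
    obtain ⟨Q, hQt, hxQ⟩ := hxcov
    have hPQ : P = (Q : Set M) := by
      by_contra hne'
      exact (hPdisj hPPa Q.2 hne').le_bot ⟨hxP, hxQ⟩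
    rw [hPQ]
    exact Finset.mem_image.mpr ⟨Q, hQt, rfl⟩
  have hle := Finset.card_le_card (hbound ((t.image (fun P : Pa => (P : Set M))).card + 1))
  have := hcard' ((t.image (fun P : Pa => (P : Set M))).card + 1)
  omega
end
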